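/- arXiv:2203.15623 — 2 statements merged into one kernel-verified Lean document; each statement's English description precedes it below -/
import Mathlib

section
/- Let n ≥ 2, 0 ≤ κ < 1, 0 < δ ≤ n, and δ/n < p < δ. Then there exists a constant c depending only on n, δ, κ, and p such that for all x ∈ ℝⁿ and all f ∈ L¹_loc(ℝⁿ): ∫_{ℝⁿ} |f(y)| / |x−y|^{n−1} dy ≤ c ( M_κ f(x) )^{(δ−p)/(δ−κp)} ( ∫_{ℝⁿ} |f(y)|^p dH^δ_∞ )^{(1−κ)/(δ−κp)}. -/
open MeasureTheory Metric Set Bornology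
open scoped ENNReal NNReal

/-- The `δ`-dimensional Hausdorff content of a set `E ⊆ ℝⁿ`, defined as the infimum of
`∑ᵢ rᵢ^δ` over all countable coverings of `E` by open balls `B(xᵢ, rᵢ)`. -/
noncomputable def hContent (n : ℕ) (δ : ℝ) (E : Set (EuclideanSpace ℝ (Fin n))) : ℝ≥0∞ :=
  ⨅ (x : ℕ → EuclideanSpace ℝ (Fin n)) (r : ℕ → ℝ≥0)
    (_ : E ⊆ ⋃ i, Metric.ball (x i) (r i)), ∑' i, (r i : ℝ≥0∞) ^ δ

/-- The `δ`-dimensional Hausdorff measure of `E ⊆ ℝⁿ`, obtained from coverings by open balls of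
radii at most `ρ`, in the limit `ρ → 0⁺` (equivalently: the supremum over `ρ > 0`, since the
infima increase as `ρ` decreases). -/
noncomputable def hMeasure (n : ℕ) (δ : ℝ) (E : Set (EuclideanSpace ℝ (Fin n))) : ℝ≥0∞ :=
  ⨆ (ρ : ℝ≥0) (_ : 0 < ρ),
    ⨅ (x : ℕ → EuclideanSpace ℝ (Fin n)) (r : ℕ → ℝ≥0)
      (_ : E ⊆ ⋃ i, Metric.ball (x i) (r i)) (_ : ∀ i, r i ≤ ρ), ∑' i, (r i : ℝ≥0∞) ^ δ

/-- The Choquet integral `∫_Ω f dH^δ_∞ = ∫₀^∞ H^δ_∞({x ∈ Ω : f x > t}) dt` of a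
(nonnegative) real-valued function with respect to the Hausdorff content. -/
noncomputable def choquet (n : ℕ) (δ : ℝ) (Ω : Set (EuclideanSpace ℝ (Fin n)))
    (f : EuclideanSpace ℝ (Fin n) → ℝ) : ℝ≥0∞ :=
  ∫⁻ t in Set.Ioi (0 : ℝ), hContent n δ {x ∈ Ω | t < f x}

/-- The Choquet integral of an `[0,∞]`-valued function with respect to the Hausdorff content. -/
noncomputable def echoquet (n : ℕ) (δ : ℝ) (Ω : Set (EuclideanSpace ℝ (Fin n)))
    (f : EuclideanSpace ℝ (Fin n) → ℝ≥0∞) : ℝ≥0∞ :=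
  ∫⁻ t in Set.Ioi (0 : ℝ), hContent n δ {x ∈ Ω | ENNReal.ofReal t < f x}

/-- The centered fractional Hardy–Littlewood maximal function
`M_κ f (x) = sup_{r>0} r^{κ-n} ∫_{B(x,r)} |f|`. -/
noncomputable def fracMaximal (n : ℕ) (κ : ℝ) (f : EuclideanSpace ℝ (Fin n) → ℝ)
    (x : EuclideanSpace ℝ (Fin n)) : ℝ≥0∞ :=
  ⨆ (r : ℝ) (_ : 0 < r),
    ENNReal.ofReal (r ^ (κ - n)) * ∫⁻ y in Metric.ball x r, ENNReal.ofReal |f y|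

/-- The Riesz potential of order `1`: `I₁ f (x) = ∫_{ℝⁿ} |f y| / |x-y|^{n-1} dy`. -/
noncomputable def rieszPot (n : ℕ) (f : EuclideanSpace ℝ (Fin n) → ℝ)
    (x : EuclideanSpace ℝ (Fin n)) : ℝ≥0∞ :=
  ∫⁻ y, ENNReal.ofReal |f y| / edist x y ^ ((n : ℝ) - 1)

/-- `Ω` is an `(α, β)`-John domain with John center `x₀`: every `x ∈ Ω` can be joined to `x₀`
by a rectifiable curve `γ : [0, L] → Ω` parametrized by arclength (hence `1`-Lipschitz) with
`γ 0 = x`, `γ L = x₀`, `L ≤ β` and `dist (γ t, ∂Ω) ≥ (α/β) t`. -/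
def IsJohnDomainWithCenter (n : ℕ) (α β : ℝ) (Ω : Set (EuclideanSpace ℝ (Fin n)))
    (x₀ : EuclideanSpace ℝ (Fin n)) : Prop :=
  x₀ ∈ Ω ∧ ∀ x ∈ Ω, ∃ L : ℝ, 0 ≤ L ∧ L ≤ β ∧ ∃ γ : ℝ → EuclideanSpace ℝ (Fin n),
    γ 0 = x ∧ γ L = x₀ ∧ (∀ t ∈ Set.Icc 0 L, γ t ∈ Ω) ∧
    LipschitzOnWith 1 γ (Set.Icc 0 L) ∧
    ∀ t ∈ Set.Icc 0 L, α / β * t ≤ Metric.infDist (γ t) (frontier Ω)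

/-- `Ω` is an `(α, β)`-John domain. -/
def IsJohnDomain (n : ℕ) (α β : ℝ) (Ω : Set (EuclideanSpace ℝ (Fin n))) : Prop :=
  ∃ x₀, IsJohnDomainWithCenter n α β Ω x₀

/-!
Hedberg's splitting argument. With `Φ(ρ) = ∫_{B(x,ρ)} |f|`, Tonelli gives
`I₁ f(x) = (n-1) ∫₀^∞ ρ^{-n} Φ(ρ) dρ`. The maximal function gives `Φ(ρ) ≤ ρ^{n-κ} M_κ f(x)`,
which is integrable against `ρ^{-n}` near `0` as `κ < 1`. The layer-cake formula on the ball, the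
Chebyshev inequality for the Choquet integral and the covering bound
`|E| ≤ |B(0,1)| H^δ_∞(E)^{n/δ}` (valid as `n/δ ≥ 1`) give
`Φ(ρ) ≲ ρ^{n-δ/p} (∫ |f|^p dH^δ_∞)^{1/p}`, which is integrable near `∞` as `p < δ`; the
integral over the levels converges because `p > δ/n`. The integral over the levels and the
integral in `ρ` are estimated the same way: an integrand on `(0,∞)` bounded by `A ρ^{α-1}` and
by `B ρ^{-β-1}` is split at the point `r` where `A r^α = B r^{-β}`.
-/

lemma lintegral_Ioi_rpow {s d : ℝ} (hs : s < -1) (hd : 0 < d) :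
    ∫⁻ ρ in Ioi d, ENNReal.ofReal (ρ ^ s) = ENNReal.ofReal (d ^ (s + 1) / -(s + 1)) := by
  rw [← ofReal_integral_eq_lintegral_ofReal (integrableOn_Ioi_rpow_of_lt hs hd)
    ((ae_restrict_iff' measurableSet_Ioi).2 (ae_of_all _ fun ρ hρ =>
      Real.rpow_nonneg (hd.trans hρ).le _)), integral_Ioi_rpow_of_lt hs hd, neg_div, div_neg]

lemma lintegral_Ioc_rpow {s r : ℝ} (hs : -1 < s) (hr : 0 ≤ r) :
    ∫⁻ ρ in Ioc 0 r, ENNReal.ofReal (ρ ^ s) = ENNReal.ofReal (r ^ (s + 1) / (s + 1)) := by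
  have hint : IntegrableOn (fun ρ : ℝ => ρ ^ s) (Ioc 0 r) :=
    (intervalIntegrable_iff_integrableOn_Ioc_of_le hr).1
      (intervalIntegral.intervalIntegrable_rpow' hs)
  rw [← ofReal_integral_eq_lintegral_ofReal hint ((ae_restrict_iff' measurableSet_Ioc).2
    (ae_of_all _ fun ρ hρ => Real.rpow_nonneg hρ.1.le _)), ← intervalIntegral.integral_of_le hr,
    integral_rpow (Or.inl hs), Real.zero_rpow (by linarith), sub_zero]

lemma exists_rpow_balance {a b α β : ℝ} (ha : 0 < a) (hb : 0 < b) (hα : 0 < α) (hβ : 0 < β) :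
    ∃ r > 0, a * r ^ α = a ^ (β / (α + β)) * b ^ (α / (α + β)) ∧
      b * r ^ (-β) = a ^ (β / (α + β)) * b ^ (α / (α + β)) := by
  have hαβ : α + β ≠ 0 := by positivity
  refine ⟨(b / a) ^ (α + β)⁻¹, by positivity, ?_, ?_⟩ <;>
    rw [← Real.rpow_mul (by positivity), Real.div_rpow hb.le ha.le, div_eq_mul_inv,
      ← Real.rpow_neg ha.le]
  · rw [show β / (α + β) = 1 + -((α + β)⁻¹ * α) by field_simp; ring, Real.rpow_add ha,
      Real.rpow_one, show α / (α + β) = (α + β)⁻¹ * α by ring]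
    ring
  · rw [show α / (α + β) = 1 + (α + β)⁻¹ * -β by field_simp; ring, Real.rpow_add hb,
      Real.rpow_one, show β / (α + β) = -((α + β)⁻¹ * -β) by ring]
    ring

lemma setLIntegral_Ioi_le_of_rpow_bounds {φ : ℝ → ℝ≥0∞} {A B α β : ℝ} (hA : 0 < A) (hB : 0 < B)
    (hα : 0 < α) (hβ : 0 < β) (h₁ : ∀ ρ > 0, φ ρ ≤ ENNReal.ofReal (A * ρ ^ (α - 1)))
    (h₂ : ∀ ρ > 0, φ ρ ≤ ENNReal.ofReal (B * ρ ^ (-β - 1))) :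
    ∫⁻ ρ in Ioi 0, φ ρ ≤
      ENNReal.ofReal ((α⁻¹ + β⁻¹) * (A ^ (β / (α + β)) * B ^ (α / (α + β)))) := by
  obtain ⟨r, hr, hAr, hBr⟩ := exists_rpow_balance hA hB hα hβ
  have hsmall : ∫⁻ ρ in Ioc 0 r, φ ρ ≤ ENNReal.ofReal (α⁻¹ * (A * r ^ α)) :=
    calc ∫⁻ ρ in Ioc 0 r, φ ρ ≤ ∫⁻ ρ in Ioc 0 r, ENNReal.ofReal A * ENNReal.ofReal (ρ ^ (α - 1)) :=
          setLIntegral_mono' measurableSet_Ioc fun ρ hρ =>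
            (h₁ ρ hρ.1).trans_eq (ENNReal.ofReal_mul hA.le)
      _ = ENNReal.ofReal (α⁻¹ * (A * r ^ α)) := by
          rw [lintegral_const_mul' _ _ ENNReal.ofReal_ne_top,
            lintegral_Ioc_rpow (by linarith) hr.le, sub_add_cancel, ← ENNReal.ofReal_mul hA.le]
          congr 1
          ring
  have hlarge : ∫⁻ ρ in Ioi r, φ ρ ≤ ENNReal.ofReal (β⁻¹ * (B * r ^ (-β))) :=
    calc ∫⁻ ρ in Ioi r, φ ρ ≤ ∫⁻ ρ in Ioi r, ENNReal.ofReal B * ENNReal.ofReal (ρ ^ (-β - 1)) :=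
          setLIntegral_mono' measurableSet_Ioi fun ρ hρ =>
            (h₂ ρ (hr.trans hρ)).trans_eq (ENNReal.ofReal_mul hB.le)
      _ = ENNReal.ofReal (β⁻¹ * (B * r ^ (-β))) := by
          rw [lintegral_const_mul' _ _ ENNReal.ofReal_ne_top, lintegral_Ioi_rpow (by linarith) hr,
            sub_add_cancel, neg_neg, ← ENNReal.ofReal_mul hB.le]
          congr 1
          ring
  calc ∫⁻ ρ in Ioi 0, φ ρ = (∫⁻ ρ in Ioc 0 r, φ ρ) + ∫⁻ ρ in Ioi r, φ ρ := by
        rw [← Ioc_union_Ioi_eq_Ioi hr.le, lintegral_union measurableSet_Ioi Ioc_disjoint_Ioi_same]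
    _ ≤ ENNReal.ofReal (α⁻¹ * (A * r ^ α)) + ENNReal.ofReal (β⁻¹ * (B * r ^ (-β))) :=
        add_le_add hsmall hlarge
    _ = _ := by
        rw [← ENNReal.ofReal_add (by positivity) (by positivity), hAr, hBr, add_mul]

lemma lintegral_ofReal_le_of_distribution_le {α : Type*} [MeasurableSpace α] {μ : Measure α}
    {g : α → ℝ} (hg : AEMeasurable g μ) (hg0 : 0 ≤ᵐ[μ] g) {V C q : ℝ} (hV : 0 < V) (hC : 0 < C)
    (hq : 1 < q) (hμ : μ univ ≤ ENNReal.ofReal V)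
    (hdist : ∀ t > 0, μ {y | t < g y} ≤ ENNReal.ofReal (C * t ^ (-q))) :
    ∫⁻ y, ENNReal.ofReal (g y) ∂μ ≤
      ENNReal.ofReal ((1 + (q - 1)⁻¹) * (V ^ ((q - 1) / q) * C ^ (1 / q))) := by
  rw [lintegral_eq_lintegral_meas_lt μ hg0 hg]
  refine (setLIntegral_Ioi_le_of_rpow_bounds hV hC one_pos (sub_pos.2 hq) (fun t _ => ?_)
    (fun t ht => ?_)).trans_eq ?_
  · rw [sub_self, Real.rpow_zero, mul_one]
    exact (measure_mono (subset_univ _)).trans hμ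
  · rw [show -(q - 1) - 1 = -q by ring]
    exact hdist t ht
  · rw [inv_one, add_sub_cancel]

lemma inv_ofReal_rpow_eq_lintegral {s d : ℝ} (hs : 0 < s) (hd : 0 < d) :
    (ENNReal.ofReal d ^ s)⁻¹ = ENNReal.ofReal s * ∫⁻ ρ in Ioi d, ENNReal.ofReal (ρ ^ (-s - 1)) := by
  rw [lintegral_Ioi_rpow (by linarith) hd, sub_add_cancel, neg_neg, ← ENNReal.ofReal_mul hs.le,
    mul_div_cancel₀ _ hs.ne', ENNReal.ofReal_rpow_of_pos hd,
    ← ENNReal.ofReal_inv_of_pos (by positivity), Real.rpow_neg hd.le]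

lemma lintegral_div_edist_rpow_eq {X : Type*} [MetricSpace X] [MeasurableSpace X] [BorelSpace X]
    {μ : Measure X} [SFinite μ] [NullSingletonClass μ] {g : X → ℝ≥0∞} (hg : AEMeasurable g μ)
    {s : ℝ} (hs : 0 < s) (x : X) :
    ∫⁻ y, g y / edist x y ^ s ∂μ = ENNReal.ofReal s *
      ∫⁻ ρ in Ioi 0, ENNReal.ofReal (ρ ^ (-s - 1)) * ∫⁻ y in ball x ρ, g y ∂μ := by
  set F : ℝ → X → ℝ≥0∞ := fun ρ y => ENNReal.ofReal (ρ ^ (-s - 1)) * (ball x ρ).indicator g y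
  have hF : AEMeasurable (Function.uncurry F) ((volume.restrict (Ioi 0)).prod μ) := by
    refine (by fun_prop : Measurable fun q : ℝ × X =>
      ENNReal.ofReal (q.1 ^ (-s - 1))).aemeasurable.mul ?_
    have hset : MeasurableSet {q : ℝ × X | dist q.2 x < q.1} :=
      measurableSet_lt (by fun_prop) (by fun_prop)
    exact hg.comp_snd.indicator hset
  have hpt : ∀ y ≠ x, g y / edist x y ^ s = ENNReal.ofReal s * ∫⁻ ρ in Ioi 0, F ρ y := by
    intro y hy
    have hd : 0 < dist y x := dist_pos.2 hy
    have hsec : ∀ ρ, F ρ y =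
        (Ioi (dist y x)).indicator (fun ρ => g y * ENNReal.ofReal (ρ ^ (-s - 1))) ρ := by
      intro ρ
      by_cases h : dist y x < ρ <;> simp [F, h, mul_comm]
    simp_rw [hsec]
    rw [lintegral_indicator measurableSet_Ioi, Measure.restrict_restrict measurableSet_Ioi,
      Ioi_inter_Ioi, max_eq_left hd.le, lintegral_const_mul _ (by fun_prop), mul_left_comm,
      ← inv_ofReal_rpow_eq_lintegral hs hd, edist_dist, dist_comm, div_eq_mul_inv]
  have hae : ∀ᵐ y ∂μ, y ≠ x := by simp [ae_iff]
  calc ∫⁻ y, g y / edist x y ^ s ∂μ = ∫⁻ y, (ENNReal.ofReal s * ∫⁻ ρ in Ioi 0, F ρ y) ∂μ :=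
        lintegral_congr_ae (hae.mono hpt)
    _ = ENNReal.ofReal s * ∫⁻ ρ in Ioi 0, ∫⁻ y, F ρ y ∂μ := by
        rw [lintegral_const_mul' _ _ ENNReal.ofReal_ne_top, lintegral_lintegral_swap hF]
    _ = _ := by
        simp_rw [F, lintegral_const_mul' _ _ ENNReal.ofReal_ne_top,
          lintegral_indicator₀ measurableSet_ball.nullMeasurableSet]

lemma ENNReal.tsum_rpow_le_rpow_tsum {ι : Type*} (a : ι → ℝ≥0∞) {q : ℝ} (hq : 1 ≤ q) :
    ∑' i, a i ^ q ≤ (∑' i, a i) ^ q := by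
  have hsplit : ∀ x : ℝ≥0∞, x ^ q = x * x ^ (q - 1) := fun x => by
    conv_lhs => rw [← add_sub_cancel 1 q]
    rw [ENNReal.rpow_add_of_nonneg _ _ zero_le_one (by linarith), ENNReal.rpow_one]
  calc ∑' i, a i ^ q ≤ ∑' i, a i * (∑' j, a j) ^ (q - 1) := ENNReal.tsum_le_tsum fun i => by
        rw [hsplit]
        gcongr
        exact ENNReal.le_tsum i
    _ = (∑' i, a i) ^ q := by rw [ENNReal.tsum_mul_right, ← hsplit]

lemma hContent_mono {n : ℕ} {δ : ℝ} {E F : Set (EuclideanSpace ℝ (Fin n))} (h : E ⊆ F) :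
    hContent n δ E ≤ hContent n δ F :=
  le_iInf fun x => le_iInf fun r => le_iInf fun hF => iInf₂_le_of_le x r (iInf_le _ (h.trans hF))

lemma volume_ball_eq_rpow_mul {n : ℕ} (hn : 0 < n) (x : EuclideanSpace ℝ (Fin n)) {r : ℝ}
    (hr : 0 ≤ r) :
    volume (ball x r) =
      ENNReal.ofReal (r ^ (n : ℝ)) * volume (ball (0 : EuclideanSpace ℝ (Fin n)) 1) := by
  have : Nonempty (Fin n) := Fin.pos_iff_nonempty.1 hn
  rw [Measure.addHaar_ball _ _ hr, finrank_euclideanSpace_fin, Real.rpow_natCast]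

lemma volume_le_hContent_rpow {n : ℕ} {δ : ℝ} (hδ0 : 0 < δ) (hδn : δ ≤ n)
    (E : Set (EuclideanSpace ℝ (Fin n))) :
    volume E ≤ volume (ball (0 : EuclideanSpace ℝ (Fin n)) 1) * hContent n δ E ^ ((n : ℝ) / δ) := by
  have hn : 0 < n := by exact_mod_cast hδ0.trans_le hδn
  have hq : 0 < (n : ℝ) / δ := by positivity
  set w := volume (ball (0 : EuclideanSpace ℝ (Fin n)) 1)
  have hcover : ∀ (x : ℕ → EuclideanSpace ℝ (Fin n)) (r : ℕ → ℝ≥0),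
      E ⊆ ⋃ i, ball (x i) (r i) → volume E ≤ w * (∑' i, (r i : ℝ≥0∞) ^ δ) ^ ((n : ℝ) / δ) :=
    fun x r hE => calc
      volume E ≤ ∑' i, volume (ball (x i) (r i)) := (measure_mono hE).trans (measure_iUnion_le _)
      _ = w * ∑' i, ((r i : ℝ≥0∞) ^ δ) ^ ((n : ℝ) / δ) := by
        rw [← ENNReal.tsum_mul_left]
        refine tsum_congr fun i => ?_
        rw [volume_ball_eq_rpow_mul hn _ (r i).coe_nonneg, mul_comm, ← ENNReal.rpow_mul,
          mul_div_cancel₀ _ hδ0.ne', ← ENNReal.ofReal_coe_nnreal,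
          ENNReal.ofReal_rpow_of_nonneg (r i).coe_nonneg (Nat.cast_nonneg n)]
      _ ≤ w * (∑' i, (r i : ℝ≥0∞) ^ δ) ^ ((n : ℝ) / δ) := by
        gcongr
        exact ENNReal.tsum_rpow_le_rpow_tsum _ ((one_le_div hδ0).2 hδn)
  rw [mul_comm, ← ENNReal.div_le_iff_le_mul (Or.inl (measure_ball_pos _ _ one_pos).ne')
    (Or.inl measure_ball_lt_top.ne), ← ENNReal.rpow_inv_le_iff hq]
  exact le_iInf fun x => le_iInf fun r => le_iInf fun hE => (ENNReal.rpow_inv_le_iff hq).2 <|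
    ENNReal.div_le_of_le_mul' (hcover x r hE)

lemma ofReal_mul_hContent_le_choquet {n : ℕ} {δ : ℝ} (Ω : Set (EuclideanSpace ℝ (Fin n)))
    (g : EuclideanSpace ℝ (Fin n) → ℝ) (t : ℝ) :
    ENNReal.ofReal t * hContent n δ {x ∈ Ω | t < g x} ≤ choquet n δ Ω g :=
  calc ENNReal.ofReal t * hContent n δ {x ∈ Ω | t < g x}
      = ∫⁻ _ in Ioo 0 t, hContent n δ {x ∈ Ω | t < g x} := by
        rw [setLIntegral_const, Real.volume_Ioo, sub_zero, mul_comm]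
    _ ≤ ∫⁻ s in Ioo 0 t, hContent n δ {x ∈ Ω | s < g x} :=
        setLIntegral_mono' measurableSet_Ioo fun _ hs =>
          hContent_mono fun _ hx => ⟨hx.1, hs.2.trans hx.2⟩
    _ ≤ choquet n δ Ω g := lintegral_mono_set Ioo_subset_Ioi_self

lemma volume_lt_abs_le_choquet {n : ℕ} {δ p : ℝ} (hδ0 : 0 < δ) (hδn : δ ≤ n) (hp : 0 < p)
    {f : EuclideanSpace ℝ (Fin n) → ℝ} (hB : choquet n δ univ (fun y => |f y| ^ p) ≠ ∞) {t : ℝ}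
    (ht : 0 < t) :
    volume {y | t < |f y|} ≤
      ENNReal.ofReal ((volume (ball (0 : EuclideanSpace ℝ (Fin n)) 1)).toReal *
        (choquet n δ univ (fun y => |f y| ^ p)).toReal ^ ((n : ℝ) / δ) * t ^ (-(p * n / δ))) := by
  have hset : {y | t < |f y|} = {y ∈ univ | t ^ p < |f y| ^ p} := by
    ext y
    simp [Real.rpow_lt_rpow_iff ht.le (abs_nonneg _) hp]
  have hcheb : hContent n δ {y | t < |f y|} ≤
      choquet n δ univ (fun y => |f y| ^ p) / ENNReal.ofReal (t ^ p) := by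
    rw [ENNReal.le_div_iff_mul_le (Or.inl (by simp; positivity)) (Or.inl ENNReal.ofReal_ne_top),
      mul_comm, hset]
    exact ofReal_mul_hContent_le_choquet _ _ _
  refine (volume_le_hContent_rpow hδ0 hδn _).trans ((mul_le_mul_right
    (ENNReal.rpow_le_rpow hcheb (by positivity)) _).trans_eq ?_)
  have hq : 0 ≤ (n : ℝ) / δ := by positivity
  rw [mul_assoc, ENNReal.ofReal_mul ENNReal.toReal_nonneg,
    ENNReal.ofReal_toReal measure_ball_lt_top.ne, ENNReal.ofReal_mul (by positivity),
    ← ENNReal.ofReal_rpow_of_nonneg ENNReal.toReal_nonneg hq, ENNReal.ofReal_toReal hB,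
    ENNReal.div_rpow_of_nonneg _ _ hq, div_eq_mul_inv, ENNReal.ofReal_rpow_of_pos (by positivity),
    ← ENNReal.ofReal_inv_of_pos (by positivity), ← Real.rpow_mul ht.le, ← Real.rpow_neg ht.le,
    mul_div_assoc]

lemma lintegral_ofReal_abs_eq_zero_of_choquet_eq_zero {n : ℕ} {δ p : ℝ} (hδ0 : 0 < δ)
    (hδn : δ ≤ n) (hp : 0 < p) {f : EuclideanSpace ℝ (Fin n) → ℝ} (hf : AEMeasurable f)
    (hB : choquet n δ univ (fun y => |f y| ^ p) = 0) :
    ∫⁻ y, ENNReal.ofReal |f y| = 0 := by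
  rw [lintegral_eq_lintegral_meas_lt _ (ae_of_all _ fun y => abs_nonneg (f y))
    (by fun_prop)]
  refine le_antisymm ((setLIntegral_mono' measurableSet_Ioi fun t ht =>
    volume_lt_abs_le_choquet hδ0 hδn hp (hB ▸ ENNReal.zero_ne_top) ht).trans_eq ?_) zero_le
  simp [hB, Real.zero_rpow (div_pos (hδ0.trans_le hδn) hδ0).ne']

lemma setLIntegral_ball_le_fracMaximal {n : ℕ} {κ : ℝ} (f : EuclideanSpace ℝ (Fin n) → ℝ)
    (x : EuclideanSpace ℝ (Fin n)) {r : ℝ} (hr : 0 < r) :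
    ∫⁻ y in ball x r, ENNReal.ofReal |f y| ≤
      ENNReal.ofReal (r ^ ((n : ℝ) - κ)) * fracMaximal n κ f x :=
  calc ∫⁻ y in ball x r, ENNReal.ofReal |f y|
      = ENNReal.ofReal (r ^ ((n : ℝ) - κ)) *
          (ENNReal.ofReal (r ^ (κ - n)) * ∫⁻ y in ball x r, ENNReal.ofReal |f y|) := by
        rw [← mul_assoc, ← ENNReal.ofReal_mul (by positivity), ← Real.rpow_add hr,
          sub_add_sub_cancel, sub_self, Real.rpow_zero, ENNReal.ofReal_one, one_mul]
    _ ≤ ENNReal.ofReal (r ^ ((n : ℝ) - κ)) * fracMaximal n κ f x := by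
        gcongr
        exact le_iSup₂ (f := fun r (_ : 0 < r) =>
          ENNReal.ofReal (r ^ (κ - n)) * ∫⁻ y in ball x r, ENNReal.ofReal |f y|) r hr

noncomputable def choquetBallConst (n : ℕ) (δ p : ℝ) : ℝ :=
  (1 + (p * n / δ - 1)⁻¹) * (volume (ball (0 : EuclideanSpace ℝ (Fin n)) 1)).toReal

lemma choquetBallConst_pos {n : ℕ} (hn : 0 < n) {δ p : ℝ} (hδ0 : 0 < δ) (hp : δ / n < p) :
    0 < choquetBallConst n δ p := by
  have : Nonempty (Fin n) := Fin.pos_iff_nonempty.1 hn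
  have hq : 0 < p * n / δ - 1 := by
    rw [sub_pos, lt_div_iff₀ hδ0, one_mul, ← div_lt_iff₀ (by exact_mod_cast hn)]
    exact hp
  have hW : 0 < (volume (ball (0 : EuclideanSpace ℝ (Fin n)) 1)).toReal :=
    ENNReal.toReal_pos (measure_ball_pos _ _ one_pos).ne' measure_ball_lt_top.ne
  unfold choquetBallConst
  positivity

lemma setLIntegral_ball_le_choquet {n : ℕ} {δ p : ℝ} (hδ0 : 0 < δ) (hδn : δ ≤ n) (hp : δ / n < p)
    {f : EuclideanSpace ℝ (Fin n) → ℝ} (hf : AEMeasurable f)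
    (hB0 : choquet n δ univ (fun y => |f y| ^ p) ≠ 0)
    (hB : choquet n δ univ (fun y => |f y| ^ p) ≠ ∞) (x : EuclideanSpace ℝ (Fin n)) {R : ℝ}
    (hR : 0 < R) :
    ∫⁻ y in ball x R, ENNReal.ofReal |f y| ≤ ENNReal.ofReal (choquetBallConst n δ p *
      ((choquet n δ univ (fun y => |f y| ^ p)).toReal ^ (1 / p) * R ^ ((n : ℝ) - δ / p))) := by
  have hn : 0 < n := by exact_mod_cast hδ0.trans_le hδn
  have hnR : (0 : ℝ) < n := by exact_mod_cast hn
  have hp0 : 0 < p := (div_pos hδ0 hnR).trans hp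
  have hq : 1 < p * n / δ := by rwa [lt_div_iff₀ hδ0, one_mul, ← div_lt_iff₀ hnR]
  set B' := (choquet n δ univ (fun y => |f y| ^ p)).toReal
  have hB' : 0 < B' := ENNReal.toReal_pos hB0 hB
  set W := (volume (ball (0 : EuclideanSpace ℝ (Fin n)) 1)).toReal with hW_def
  have hW : 0 < W := ENNReal.toReal_pos (measure_ball_pos _ _ one_pos).ne' measure_ball_lt_top.ne
  have hball : volume.restrict (ball x R) univ ≤ ENNReal.ofReal (W * R ^ (n : ℝ)) := by
    rw [Measure.restrict_apply_univ, volume_ball_eq_rpow_mul hn x hR.le, mul_comm,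
      ENNReal.ofReal_mul hW.le, ENNReal.ofReal_toReal measure_ball_lt_top.ne]
  have hexp : (W * R ^ (n : ℝ)) ^ ((p * n / δ - 1) / (p * n / δ)) *
      (W * B' ^ ((n : ℝ) / δ)) ^ (1 / (p * n / δ)) =
        W * (B' ^ (1 / p) * R ^ ((n : ℝ) - δ / p)) := by
    rw [Real.mul_rpow hW.le (by positivity), Real.mul_rpow hW.le (by positivity),
      ← Real.rpow_mul hR.le, ← Real.rpow_mul hB'.le, mul_mul_mul_comm, ← Real.rpow_add hW,
      ← add_div, sub_add_cancel, div_self (by positivity), Real.rpow_one, mul_comm (R ^ _)]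
    congr 3 <;> field_simp
  refine (lintegral_ofReal_le_of_distribution_le (by fun_prop) (ae_of_all _ fun y => abs_nonneg _)
    (by positivity) (by positivity) hq hball fun t ht => (Measure.restrict_le_self _).trans
      (volume_lt_abs_le_choquet hδ0 hδn hp0 hB ht)).trans_eq ?_
  rw [hexp, choquetBallConst, ← hW_def]
  congr 1
  ring

lemma rieszPot_eq_lintegral_ball {n : ℕ} (hn : 2 ≤ n) {f : EuclideanSpace ℝ (Fin n) → ℝ}
    (hf : AEMeasurable f) (x : EuclideanSpace ℝ (Fin n)) :
    rieszPot n f x = ENNReal.ofReal ((n : ℝ) - 1) *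
      ∫⁻ ρ in Ioi 0, ENNReal.ofReal (ρ ^ (-(n : ℝ))) * ∫⁻ y in ball x ρ, ENNReal.ofReal |f y| := by
  have : Nonempty (Fin n) := Fin.pos_iff_nonempty.1 (by omega)
  have hs : (0 : ℝ) < n - 1 := by
    have : (2 : ℝ) ≤ n := by exact_mod_cast hn
    linarith
  have hg : AEMeasurable (fun y => ENNReal.ofReal |f y|) := by fun_prop
  rw [rieszPot, lintegral_div_edist_rpow_eq hg hs, neg_sub, sub_sub_cancel_left]

lemma rieszPot_eq_zero_of_forall_setLIntegral_ball_eq_zero {n : ℕ} (hn : 2 ≤ n)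
    {f : EuclideanSpace ℝ (Fin n) → ℝ} (hf : AEMeasurable f) {x : EuclideanSpace ℝ (Fin n)}
    (h : ∀ ρ > 0, ∫⁻ y in ball x ρ, ENNReal.ofReal |f y| = 0) :
    rieszPot n f x = 0 := by
  rw [rieszPot_eq_lintegral_ball hn hf, setLIntegral_congr_fun measurableSet_Ioi
    fun ρ hρ => by rw [h ρ hρ, mul_zero]]
  simp

noncomputable def hedbergConst (n : ℕ) (κ δ p : ℝ) : ℝ :=
  ((n : ℝ) - 1) * ((1 - κ)⁻¹ + (δ / p - 1)⁻¹) * choquetBallConst n δ p ^ ((1 - κ) / (δ / p - κ))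

lemma hedbergConst_pos {n : ℕ} (hn : 2 ≤ n) {κ δ p : ℝ} (hκ1 : κ < 1) (hδ0 : 0 < δ)
    (hp1 : δ / n < p) (hp2 : p < δ) : 0 < hedbergConst n κ δ p := by
  have hnR : (2 : ℝ) ≤ n := by exact_mod_cast hn
  have hp0 : 0 < p := (div_pos hδ0 (by linarith)).trans hp1
  have := choquetBallConst_pos (by omega) hδ0 hp1
  have : 0 < 1 - κ := by linarith
  have : 0 < δ / p - 1 := by linarith [(one_lt_div hp0).2 hp2]
  have : (0 : ℝ) < n - 1 := by linarith
  unfold hedbergConst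
  positivity

-- The right-hand side is `(n-1)` times what `setLIntegral_Ioi_le_of_rpow_bounds` gives for the
-- bounds `M ρ^{-κ}` and `choquetBallConst n δ p * B^{1/p} ρ^{-δ/p}`.
lemma hedbergConst_mul_rpow_mul_rpow {n : ℕ} {κ δ p : ℝ} (M : ℝ) {B : ℝ} (hB : 0 < B)
    (hK : 0 ≤ choquetBallConst n δ p) (hp0 : 0 < p) :
    hedbergConst n κ δ p * M ^ ((δ - p) / (δ - κ * p)) * B ^ ((1 - κ) / (δ - κ * p)) =
      ((n : ℝ) - 1) * (((1 - κ)⁻¹ + (δ / p - 1)⁻¹) *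
        (M ^ ((δ / p - 1) / (1 - κ + (δ / p - 1))) *
          (choquetBallConst n δ p * B ^ (1 / p)) ^ ((1 - κ) / (1 - κ + (δ / p - 1))))) := by
  rw [show 1 - κ + (δ / p - 1) = δ / p - κ by ring, Real.mul_rpow hK (by positivity),
    ← Real.rpow_mul hB.le, show (δ / p - 1) / (δ / p - κ) = (δ - p) / (δ - κ * p) by
      field_simp, show 1 / p * ((1 - κ) / (δ / p - κ)) = (1 - κ) / (δ - κ * p) by
      field_simp, hedbergConst]
  ring

lemma rieszPot_le_of_ne_zero_of_ne_top {n : ℕ} (hn : 2 ≤ n) {κ δ p : ℝ} (hκ1 : κ < 1)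
    (hδ0 : 0 < δ) (hδn : δ ≤ n) (hp1 : δ / n < p) (hp2 : p < δ)
    {f : EuclideanSpace ℝ (Fin n) → ℝ} (hf : AEMeasurable f) (x : EuclideanSpace ℝ (Fin n))
    (hM0 : fracMaximal n κ f x ≠ 0) (hM : fracMaximal n κ f x ≠ ∞)
    (hB0 : choquet n δ univ (fun y => |f y| ^ p) ≠ 0)
    (hB : choquet n δ univ (fun y => |f y| ^ p) ≠ ∞) :
    rieszPot n f x ≤ ENNReal.ofReal (hedbergConst n κ δ p) *
      fracMaximal n κ f x ^ ((δ - p) / (δ - κ * p)) *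
      choquet n δ univ (fun y => |f y| ^ p) ^ ((1 - κ) / (δ - κ * p)) := by
  have hnR : (2 : ℝ) ≤ n := by exact_mod_cast hn
  have hp0 : 0 < p := (div_pos hδ0 (by linarith)).trans hp1
  have hδp : 1 < δ / p := (one_lt_div hp0).2 hp2
  set M' := (fracMaximal n κ f x).toReal
  have hM' : 0 < M' := ENNReal.toReal_pos hM0 hM
  set B' := (choquet n δ univ (fun y => |f y| ^ p)).toReal
  have hB' : 0 < B' := ENNReal.toReal_pos hB0 hB
  set K := choquetBallConst n δ p
  have hK : 0 < K := choquetBallConst_pos (by omega) hδ0 hp1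
  have hC := hedbergConst_pos hn hκ1 hδ0 hp1 hp2
  have : (0 : ℝ) < n - 1 := by linarith
  have : 0 < 1 - κ := by linarith
  have : 0 < δ / p - 1 := by linarith
  have hsmall : ∀ ρ > 0, ENNReal.ofReal (ρ ^ (-(n : ℝ))) *
      ∫⁻ y in ball x ρ, ENNReal.ofReal |f y| ≤ ENNReal.ofReal (M' * ρ ^ ((1 - κ) - 1)) := by
    intro ρ hρ
    calc _ ≤ ENNReal.ofReal (ρ ^ (-(n : ℝ))) * (ENNReal.ofReal (ρ ^ ((n : ℝ) - κ)) *
          ENNReal.ofReal M') := by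
          rw [ENNReal.ofReal_toReal hM]
          gcongr
          exact setLIntegral_ball_le_fracMaximal f x hρ
      _ = _ := by
          rw [← ENNReal.ofReal_mul (by positivity), ← ENNReal.ofReal_mul (by positivity),
            show 1 - κ - 1 = -(n : ℝ) + (n - κ) by ring, Real.rpow_add hρ]
          congr 1
          ring
  have hlarge : ∀ ρ > 0, ENNReal.ofReal (ρ ^ (-(n : ℝ))) *
      ∫⁻ y in ball x ρ, ENNReal.ofReal |f y| ≤
        ENNReal.ofReal (K * B' ^ (1 / p) * ρ ^ (-(δ / p - 1) - 1)) := by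
    intro ρ hρ
    calc _ ≤ ENNReal.ofReal (ρ ^ (-(n : ℝ))) *
          ENNReal.ofReal (K * (B' ^ (1 / p) * ρ ^ ((n : ℝ) - δ / p))) := by
          gcongr
          exact setLIntegral_ball_le_choquet hδ0 hδn hp1 hf hB0 hB x hρ
      _ = _ := by
          rw [← ENNReal.ofReal_mul (by positivity)]
          congr 1
          rw [show -(δ / p - 1) - 1 = -(n : ℝ) + (n - δ / p) by ring, Real.rpow_add hρ]
          ring
  rw [rieszPot_eq_lintegral_ball hn hf x, ← ENNReal.ofReal_toReal hM, ← ENNReal.ofReal_toReal hB,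
    ENNReal.ofReal_rpow_of_pos hM', ENNReal.ofReal_rpow_of_pos hB', ← ENNReal.ofReal_mul hC.le,
    ← ENNReal.ofReal_mul (by positivity), hedbergConst_mul_rpow_mul_rpow M' hB' hK.le hp0,
    ENNReal.ofReal_mul (by linarith)]
  gcongr
  exact setLIntegral_Ioi_le_of_rpow_bounds hM' (by positivity) (by linarith) (by linarith)
    hsmall hlarge

theorem choquet_hedberg_general (n : ℕ) (hn : 2 ≤ n) (κ δ p : ℝ)
    (hκ1 : κ < 1) (hδ0 : 0 < δ) (hδn : δ ≤ (n : ℝ))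
    (hp1 : δ / n < p) (hp2 : p < δ) :
    ∃ c : ℝ≥0, 0 < c ∧
      ∀ f : EuclideanSpace ℝ (Fin n) → ℝ, LocallyIntegrable f volume →
        ∀ x : EuclideanSpace ℝ (Fin n),
          rieszPot n f x
            ≤ c * fracMaximal n κ f x ^ ((δ - p) / (δ - κ * p)) *
                (choquet n δ Set.univ fun y => |f y| ^ p) ^ ((1 - κ) / (δ - κ * p)) := by
  have hC := hedbergConst_pos hn hκ1 hδ0 hp1 hp2
  have hnR : (2 : ℝ) ≤ n := by exact_mod_cast hn
  have hp0 : 0 < p := (div_pos hδ0 (by linarith)).trans hp1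
  have hκp : 0 < δ - κ * p := by nlinarith
  have ha : 0 < (δ - p) / (δ - κ * p) := div_pos (by linarith) hκp
  have hb : 0 < (1 - κ) / (δ - κ * p) := div_pos (by linarith) hκp
  refine ⟨(hedbergConst n κ δ p).toNNReal, Real.toNNReal_pos.2 hC, fun f hf x => ?_⟩
  have hfm : AEMeasurable f := hf.aestronglyMeasurable.aemeasurable
  by_cases h0 : fracMaximal n κ f x = 0 ∨ choquet n δ univ (fun y => |f y| ^ p) = 0
  · refine (rieszPot_eq_zero_of_forall_setLIntegral_ball_eq_zero hn hfm fun ρ hρ => ?_).trans_le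
      zero_le
    refine le_antisymm ?_ zero_le
    rcases h0 with hM | hB
    · simpa [hM] using setLIntegral_ball_le_fracMaximal (κ := κ) f x hρ
    · exact (setLIntegral_le_lintegral _ _).trans_eq
        (lintegral_ofReal_abs_eq_zero_of_choquet_eq_zero hδ0 hδn hp0 hfm hB)
  rw [not_or] at h0
  by_cases htop : fracMaximal n κ f x = ∞ ∨ choquet n δ univ (fun y => |f y| ^ p) = ∞
  · refine le_top.trans_eq (Eq.symm ?_)
    rcases htop with h | h <;>
      simp [h, h0.1, h0.2, hC, ha, hb, ha.le, hb.le, ENNReal.top_rpow_of_pos,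
        ENNReal.rpow_eq_zero_iff]
  rw [not_or] at htop
  exact rieszPot_le_of_ne_zero_of_ne_top hn hκ1 hδ0 hδn hp1 hp2 hfm x h0.1 htop.1 h0.2 htop.2

/-- Hedberg-type pointwise estimate with a Choquet integral. For `0 ≤ κ < 1`,
`0 < δ ≤ n`, `δ/n < p < δ` there is `c = c(n, δ, κ, p)` such that for all `x ∈ ℝⁿ` and all
`f ∈ L¹_loc(ℝⁿ)`,
`∫_{ℝⁿ} |f(y)|/|x-y|^{n-1} dy ≤ c (M_κ f x)^{(δ-p)/(δ-κp)} (∫_{ℝⁿ} |f|^p dH^δ_∞)^{(1-κ)/(δ-κp)}`. -/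
theorem choquet_hedberg (n : ℕ) (hn : 2 ≤ n) (κ δ p : ℝ)
    (hκ0 : 0 ≤ κ) (hκ1 : κ < 1) (hδ0 : 0 < δ) (hδn : δ ≤ (n : ℝ))
    (hp1 : δ / n < p) (hp2 : p < δ) :
    ∃ c : ℝ≥0, 0 < c ∧
      ∀ f : EuclideanSpace ℝ (Fin n) → ℝ, LocallyIntegrable f volume →
        ∀ x : EuclideanSpace ℝ (Fin n),
          rieszPot n f x
            ≤ c * fracMaximal n κ f x ^ ((δ - p) / (δ - κ * p)) *
                (choquet n δ Set.univ fun y => |f y| ^ p) ^ ((1 - κ) / (δ - κ * p)) :=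
  choquet_hedberg_general n hn κ δ p hκ1 hδ0 hδn hp1 hp2
end

section
/- Let n ≥ 2 and let Ω = B(0,1) \ {0} ⊆ ℝⁿ be the punctured open unit ball. Let 0 < δ ≤ n, 0 ≤ κ < 1, δ/n < p < δ, and q > p(δ−κp)/(δ−p). Then there exists μ with 1 − δ/p < μ ≤ −(δ−κp)/q such that the function v(x) := |x|^μ, which belongs to C^∞(Ω), satisfies ∫_Ω |∇v(x)|^p dH^δ_∞ < ∞ while ∫_Ω |v(x) − a|^q dH^{δ−κp}_∞ = ∞ for every a ∈ ℝ. In particular, the exponent p(δ−κp)/(δ−p) in the Poincaré–Sobolev inequality with Hausdorff contents is the best possible. -/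
open MeasureTheory Metric Set Bornology
open scoped ENNReal NNReal

section auxlemmas

lemma hContent_le {n : ℕ} {δ : ℝ} (hδ : 0 < δ) {E : Set (EuclideanSpace ℝ (Fin n))} {R : ℝ≥0}
    (hE : E ⊆ Metric.ball 0 R) : hContent n δ E ≤ (R : ℝ≥0∞) ^ δ := by
  refine iInf_le_of_le (fun _ => 0)
    (iInf_le_of_le (fun i => if i = 0 then R else 0) (iInf_le_of_le ?_ ?_))
  · intro y hy
    exact mem_iUnion.2 ⟨0, by simpa using hE hy⟩
  · rw [tsum_eq_single 0]
    · simp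
    · intro i hi
      simp [hi, ENNReal.zero_rpow_of_pos hδ]

lemma le_hContent_punctured_ball {n : ℕ} (hn : 0 < n) {δ : ℝ} (hδ0 : 0 < δ) (hδn : δ ≤ n)
    {R : ℝ} (hR0 : 0 < R) :
    ENNReal.ofReal R ^ δ ≤ hContent n δ (Metric.ball (0 : EuclideanSpace ℝ (Fin n)) R \ {0}) := by
  haveI : Nontrivial (EuclideanSpace ℝ (Fin n)) := by
    refine ⟨EuclideanSpace.single ⟨0, hn⟩ 1, 0, fun h => ?_⟩
    have := congrArg (fun v => v ⟨0, hn⟩) h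
    simp [EuclideanSpace.single_apply] at this
  refine le_iInf fun x => le_iInf fun r => le_iInf fun hcov => ?_
  by_cases hbig : ∃ i, R ≤ r i
  · obtain ⟨i, hi⟩ := hbig
    refine le_trans ?_ (ENNReal.le_tsum i)
    refine ENNReal.rpow_le_rpow ?_ hδ0.le
    calc ENNReal.ofReal R ≤ ENNReal.ofReal (r i : ℝ) := ENNReal.ofReal_le_ofReal hi
      _ = (r i : ℝ≥0∞) := ENNReal.ofReal_coe_nnreal
  · push_neg at hbig
    set R' : ℝ≥0 := R.toNNReal with hR'
    have hR'0 : R' ≠ 0 := by simp [hR', Real.toNNReal_eq_zero, not_le, hR0]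
    set V : ℝ≥0∞ := volume (Metric.ball (0 : EuclideanSpace ℝ (Fin n)) 1) with hV
    have hV0 : V ≠ 0 := (measure_ball_pos volume 0 one_pos).ne'
    have hVtop : V ≠ ∞ := measure_ball_lt_top.ne
    have hfr : Module.finrank ℝ (EuclideanSpace ℝ (Fin n)) = n := finrank_euclideanSpace_fin
    have hvol : ∀ (c : EuclideanSpace ℝ (Fin n)) (s : ℝ≥0),
        volume (Metric.ball c (s : ℝ)) = ((s ^ (n : ℝ) : ℝ≥0) : ℝ≥0∞) * V := by
      intro c s
      rw [Measure.addHaar_ball volume c s.coe_nonneg, hfr]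
      congr 1
      rw [NNReal.rpow_natCast, ← NNReal.coe_pow, ENNReal.ofReal_coe_nnreal]
    have hcov' : volume (Metric.ball (0 : EuclideanSpace ℝ (Fin n)) R) ≤
        ∑' i, ((r i ^ (n : ℝ) : ℝ≥0) : ℝ≥0∞) * V := by
      calc volume (Metric.ball (0 : EuclideanSpace ℝ (Fin n)) R)
          = volume (Metric.ball (0 : EuclideanSpace ℝ (Fin n)) R \ {0}) :=
            (measure_diff_null (measure_singleton 0)).symm
        _ ≤ volume (⋃ i, Metric.ball (x i) (r i)) := measure_mono hcov
        _ ≤ ∑' i, volume (Metric.ball (x i) (r i)) := measure_iUnion_le _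
        _ = ∑' i, ((r i ^ (n : ℝ) : ℝ≥0) : ℝ≥0∞) * V := by
            refine tsum_congr fun i => hvol (x i) (r i)
    have hvolR : volume (Metric.ball (0 : EuclideanSpace ℝ (Fin n)) R) =
        ((R' ^ (n : ℝ) : ℝ≥0) : ℝ≥0∞) * V := by
      have := hvol 0 R'
      rwa [Real.coe_toNNReal _ hR0.le] at this
    have hsum : ((R' ^ (n : ℝ) : ℝ≥0) : ℝ≥0∞) ≤ ∑' i, ((r i ^ (n : ℝ) : ℝ≥0) : ℝ≥0∞) := by
      rw [← ENNReal.mul_le_mul_iff_left hV0 hVtop, ← ENNReal.tsum_mul_right]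
      rw [← hvolR]
      exact hcov'
    have hterm : ∀ i : ℕ, (R' ^ (δ - n) * (r i ^ (n : ℝ)) : ℝ≥0) ≤ (r i ^ δ : ℝ≥0) := by
      intro i
      rcases eq_or_ne (r i) 0 with h0 | h0
      · have hn0 : (n : ℝ) ≠ 0 := Nat.cast_ne_zero.2 hn.ne'
        simp [h0, NNReal.zero_rpow hn0]
      · have : (r i : ℝ≥0) ^ δ = r i ^ (δ - n) * r i ^ (n : ℝ) := by
          rw [← NNReal.rpow_add h0]
          ring_nf
        rw [this]
        refine mul_le_mul_of_nonneg_right ?_ zero_le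
        refine NNReal.rpow_le_rpow_of_nonpos (zero_lt_iff.2 h0) ?_ (by linarith)
        rw [hR']
        exact (Real.le_toNNReal_iff_coe_le hR0.le).2 (hbig i).le
    have hr' : ENNReal.ofReal R = (R' : ℝ≥0∞) := rfl
    rw [hr']
    have hcoe : ∀ b : ℝ≥0, ((b : ℝ≥0∞)) ^ δ = ((b ^ δ : ℝ≥0) : ℝ≥0∞) :=
      fun b => (ENNReal.coe_rpow_of_nonneg b hδ0.le).symm
    rw [hcoe R']
    have h1 : (R' ^ δ : ℝ≥0) = R' ^ (δ - n) * R' ^ (n : ℝ) := by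
      rw [← NNReal.rpow_add hR'0]; ring_nf
    calc ((R' ^ δ : ℝ≥0) : ℝ≥0∞) = ((R' ^ (δ - n) : ℝ≥0) : ℝ≥0∞) * ((R' ^ (n : ℝ) : ℝ≥0) : ℝ≥0∞) := by
          rw [h1, ENNReal.coe_mul]
      _ ≤ ((R' ^ (δ - n) : ℝ≥0) : ℝ≥0∞) * ∑' i, ((r i ^ (n : ℝ) : ℝ≥0) : ℝ≥0∞) := by
          exact mul_le_mul_right hsum _
      _ = ∑' i, ((R' ^ (δ - n) : ℝ≥0) : ℝ≥0∞) * ((r i ^ (n : ℝ) : ℝ≥0) : ℝ≥0∞) :=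
          ENNReal.tsum_mul_left.symm
      _ ≤ ∑' i, ((r i ^ δ : ℝ≥0) : ℝ≥0∞) := by
          refine ENNReal.tsum_le_tsum fun i => ?_
          rw [← ENNReal.coe_mul]
          exact ENNReal.coe_le_coe.2 (hterm i)
      _ = ∑' i, ((r i : ℝ≥0∞)) ^ δ := tsum_congr fun i => by rw [hcoe]

lemma norm_fderiv_rpow_le {n : ℕ} {μ : ℝ} {x : EuclideanSpace ℝ (Fin n)} (hx0 : x ≠ 0) :
    ‖fderiv ℝ (fun y : EuclideanSpace ℝ (Fin n) => ‖y‖ ^ μ) x‖ ≤ |μ| * ‖x‖ ^ (μ - 1) := by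
  have hnx : ‖x‖ ≠ 0 := norm_ne_zero_iff.2 hx0
  have hdn : DifferentiableAt ℝ (fun y : EuclideanSpace ℝ (Fin n) => ‖y‖) x :=
    (contDiffAt_norm (𝕜 := ℝ) (E := EuclideanSpace ℝ (Fin n)) (n := 1) hx0).differentiableAt one_ne_zero
  have hder : HasFDerivAt (fun y : EuclideanSpace ℝ (Fin n) => ‖y‖ ^ μ)
      ((μ * ‖x‖ ^ (μ - 1)) • fderiv ℝ (fun y : EuclideanSpace ℝ (Fin n) => ‖y‖) x) x :=
    (hdn.hasFDerivAt).rpow_const (Or.inl hnx)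
  rw [hder.fderiv, norm_smul]
  have h1 : ‖fderiv ℝ (fun y : EuclideanSpace ℝ (Fin n) => ‖y‖) x‖ ≤ 1 := by
    have := norm_fderiv_le_of_lipschitz ℝ
      (lipschitzWith_one_norm (E := EuclideanSpace ℝ (Fin n))) (x₀ := x)
    simpa using this
  calc ‖μ * ‖x‖ ^ (μ - 1)‖ * ‖fderiv ℝ (fun y : EuclideanSpace ℝ (Fin n) => ‖y‖) x‖
      ≤ ‖μ * ‖x‖ ^ (μ - 1)‖ * 1 := mul_le_mul_of_nonneg_left h1 (norm_nonneg _)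
    _ = |μ| * ‖x‖ ^ (μ - 1) := by
        rw [mul_one, Real.norm_eq_abs, abs_mul,
          abs_of_nonneg (Real.rpow_nonneg (norm_nonneg x) _)]

end auxlemmas

/-- Example: sharpness of the exponent `p(δ-κp)/(δ-p)`. Let
`Ω = B(0,1) \ {0} ⊆ ℝⁿ`, `0 < δ ≤ n`, `0 ≤ κ < 1`, `δ/n < p < δ` and
`q > p(δ-κp)/(δ-p)`. Then there is `μ` with `1 - δ/p < μ ≤ -(δ-κp)/q` such that
`v(x) = |x|^μ ∈ C^∞(Ω)` satisfies `∫_Ω |∇v|^p dH^δ_∞ < ∞` while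
`∫_Ω |v - a|^q dH^{δ-κp}_∞ = ∞` for every `a ∈ ℝ`. -/
theorem sharpness_example (n : ℕ) (hn : 2 ≤ n) (δ κ p q : ℝ)
    (hδ0 : 0 < δ) (hδn : δ ≤ (n : ℝ)) (hκ0 : 0 ≤ κ) (hκ1 : κ < 1)
    (hp1 : δ / n < p) (hp2 : p < δ) (hq : p * (δ - κ * p) / (δ - p) < q) :
    ∃ μ : ℝ, 1 - δ / p < μ ∧ μ ≤ -(δ - κ * p) / q ∧
      ContDiffOn ℝ (⊤ : ℕ∞) (fun x : EuclideanSpace ℝ (Fin n) => ‖x‖ ^ μ)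
        (Metric.ball (0 : EuclideanSpace ℝ (Fin n)) 1 \ {0}) ∧
      choquet n δ (Metric.ball (0 : EuclideanSpace ℝ (Fin n)) 1 \ {0})
          (fun x => ‖fderiv ℝ (fun y : EuclideanSpace ℝ (Fin n) => ‖y‖ ^ μ) x‖ ^ p) < ∞ ∧
      ∀ a : ℝ,
        choquet n (δ - κ * p) (Metric.ball (0 : EuclideanSpace ℝ (Fin n)) 1 \ {0})
          (fun x => |‖x‖ ^ μ - a| ^ q) = ∞ := by
  have hn0 : 0 < n := lt_of_lt_of_le two_pos hn
  have hnR : (0:ℝ) < n := by exact_mod_cast hn0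
  have hp0 : 0 < p := lt_trans (div_pos hδ0 hnR) hp1
  have hδp : 0 < δ - p := sub_pos.2 hp2
  have hκp : κ * p < δ := by nlinarith
  have hδ' : 0 < δ - κ * p := sub_pos.2 hκp
  have hq0 : 0 < q := lt_trans (by positivity) hq
  set μ : ℝ := -(δ - κ * p) / q with hμdef
  have hμ0 : μ < 0 := div_neg_of_neg_of_pos (by linarith) hq0
  have key : p * (δ - κ * p) < q * (δ - p) := by
    have := (div_lt_iff₀ hδp).1 hq
    nlinarith [this]
  have hμ1 : 1 - δ / p < μ := by
    rw [hμdef, show (1:ℝ) - δ / p = (p - δ)/p by field_simp,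
        show -(δ - κ*p)/q = (κ*p - δ)/q by ring, div_lt_div_iff₀ hp0 hq0]
    nlinarith [key]
  refine ⟨μ, hμ1, le_of_eq hμdef, ?_, ?_, ?_⟩
  · -- smoothness
    intro x hx
    have hx0 : x ≠ 0 := fun h => hx.2 (by simp [h])
    have h1 : ContDiffAt ℝ (⊤ : ℕ∞) (fun s : ℝ => s ^ μ) ‖x‖ :=
      Real.contDiffAt_rpow_const_of_ne (norm_ne_zero_iff.2 hx0)
    have h2 : ContDiffAt ℝ (⊤ : ℕ∞) (fun y : EuclideanSpace ℝ (Fin n) => ‖y‖) x :=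
      contDiffAt_norm (𝕜 := ℝ) hx0
    exact (h1.comp x h2).contDiffWithinAt
  · -- finiteness of the gradient integral
    set Ω : Set (EuclideanSpace ℝ (Fin n)) := Metric.ball 0 1 \ {0} with hΩ
    set f : EuclideanSpace ℝ (Fin n) → ℝ :=
      fun x => ‖fderiv ℝ (fun y : EuclideanSpace ℝ (Fin n) => ‖y‖ ^ μ) x‖ ^ p with hf
    set A : ℝ := |μ| ^ p with hA
    have hA0 : 0 < A := Real.rpow_pos_of_pos (abs_pos.2 hμ0.ne) p
    set e : ℝ := (μ - 1) * p with he
    have he0 : e < 0 := mul_neg_of_neg_of_pos (by linarith) hp0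
    set s : ℝ := δ / ((1 - μ) * p) with hs
    have hP0 : 0 < (1 - μ) * p := mul_pos (by linarith) hp0
    have hs1 : 1 < s := by
      rw [hs, lt_div_iff₀ hP0]
      have : (1 - μ) < δ / p := by linarith
      calc 1 * ((1 - μ) * p) = (1 - μ) * p := one_mul _
        _ < (δ / p) * p := by exact mul_lt_mul_of_pos_right this hp0
        _ = δ := by field_simp
    have hexp : e⁻¹ * δ = -s := by
      rw [hs, he]
      rw [show (μ - 1) * p = -((1 - μ) * p) by ring]
      field_simp
    -- pointwise superlevel bound
    have hfub : ∀ x : EuclideanSpace ℝ (Fin n), x ≠ 0 → f x ≤ A * ‖x‖ ^ e := by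
      intro x hx0
      have hb := norm_fderiv_rpow_le (μ := μ) hx0
      calc f x ≤ (|μ| * ‖x‖ ^ (μ - 1)) ^ p :=
            Real.rpow_le_rpow (norm_nonneg _) hb hp0.le
        _ = A * (‖x‖ ^ (μ - 1)) ^ p :=
            Real.mul_rpow (abs_nonneg μ) (Real.rpow_nonneg (norm_nonneg x) _)
        _ = A * ‖x‖ ^ e := by rw [he, Real.rpow_mul (norm_nonneg x)]
    have hlevel : ∀ t : ℝ, 0 < t → ∀ x : EuclideanSpace ℝ (Fin n),
        x ∈ Ω → t < f x → ‖x‖ < (t / A) ^ e⁻¹ := by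
      intro t ht x hxΩ htf
      have hx0 : x ≠ 0 := fun h => hxΩ.2 (by simp [h])
      have h1 : t / A < ‖x‖ ^ e := by
        rw [div_lt_iff₀ hA0]
        calc t < f x := htf
          _ ≤ A * ‖x‖ ^ e := hfub x hx0
          _ = ‖x‖ ^ e * A := mul_comm _ _
      have h2 : (‖x‖ ^ e) ^ e⁻¹ < (t / A) ^ e⁻¹ :=
        Real.rpow_lt_rpow_of_neg (div_pos ht hA0) h1 (inv_lt_zero.2 he0)
      rwa [Real.rpow_rpow_inv (norm_nonneg x) he0.ne] at h2
    -- the dominating function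
    have hmeas2 : Measurable fun t : ℝ => ENNReal.ofReal ((t / A) ^ (-s)) := by
      fun_prop
    have hbnd : ∀ t ∈ Ioi (0:ℝ), hContent n δ {x ∈ Ω | t < f x} ≤
        (Ioc (0:ℝ) 1).indicator (fun _ => (1:ℝ≥0∞)) t
          + (Ioi (1:ℝ)).indicator (fun t => ENNReal.ofReal ((t / A) ^ (-s))) t := by
      intro t ht
      rcases le_or_gt t 1 with h1 | h1
      · rw [indicator_of_mem (mem_Ioc.2 ⟨ht, h1⟩), indicator_of_notMem (by simpa using h1)]
        rw [add_zero]
        have hsub : {x ∈ Ω | t < f x} ⊆ Metric.ball 0 ((1:ℝ≥0) : ℝ) := by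
          intro x hx
          simpa using hx.1.1
        simpa using hContent_le hδ0 hsub
      · rw [indicator_of_notMem (by simp [not_le.2 h1] : t ∉ Ioc (0:ℝ) 1),
          indicator_of_mem (mem_Ioi.2 h1), zero_add]
        set ρ : ℝ := (t / A) ^ e⁻¹ with hρ
        have ht0 : (0:ℝ) < t := ht
        have hρpos : 0 < ρ := Real.rpow_pos_of_pos (div_pos ht0 hA0) _
        have hmin : 0 < min 1 ρ := lt_min one_pos hρpos
        have hsub : {x ∈ Ω | t < f x} ⊆ Metric.ball 0 (((min 1 ρ).toNNReal : ℝ≥0) : ℝ) := by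
          intro x hx
          have h2 := hlevel t ht0 x hx.1 hx.2
          have hx1 : ‖x‖ < 1 := by
            have := hx.1.1
            simpa [mem_ball_zero_iff] using this
          rw [mem_ball_zero_iff, Real.coe_toNNReal _ hmin.le]
          exact lt_min hx1 h2
        calc hContent n δ {x ∈ Ω | t < f x} ≤ (((min 1 ρ).toNNReal : ℝ≥0) : ℝ≥0∞) ^ δ :=
              hContent_le hδ0 hsub
          _ = ENNReal.ofReal (min 1 ρ) ^ δ := rfl
          _ = ENNReal.ofReal ((min 1 ρ) ^ δ) := ENNReal.ofReal_rpow_of_pos hmin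
          _ ≤ ENNReal.ofReal (ρ ^ δ) := ENNReal.ofReal_le_ofReal
              (Real.rpow_le_rpow hmin.le (min_le_right _ _) hδ0.le)
          _ = ENNReal.ofReal ((t / A) ^ (-s)) := by
              rw [hρ, ← Real.rpow_mul (div_nonneg ht0.le hA0.le), hexp]
    -- integrability of the dominating function
    have hint0 : IntegrableOn (fun t : ℝ => A ^ s * t ^ (-s)) (Ioi (1:ℝ)) :=
      (integrableOn_Ioi_rpow_of_lt (by linarith) one_pos).const_mul _
    have hint : IntegrableOn (fun t : ℝ => (t / A) ^ (-s)) (Ioi (1:ℝ)) := by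
      refine hint0.congr_fun (fun t ht => ?_) measurableSet_Ioi
      have ht0 : (0:ℝ) < t := lt_trans one_pos ht
      rw [Real.div_rpow ht0.le hA0.le, Real.rpow_neg hA0.le, div_eq_mul_inv, inv_inv, mul_comm]
    have hnn : 0 ≤ᵐ[volume.restrict (Ioi (1:ℝ))] fun t : ℝ => (t / A) ^ (-s) := by
      filter_upwards [ae_restrict_mem measurableSet_Ioi] with t ht
      exact Real.rpow_nonneg (div_nonneg (le_of_lt (lt_trans one_pos ht)) hA0.le) _
    calc choquet n δ Ω f = ∫⁻ t in Ioi (0:ℝ), hContent n δ {x ∈ Ω | t < f x} := rfl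
      _ ≤ ∫⁻ t in Ioi (0:ℝ), ((Ioc (0:ℝ) 1).indicator (fun _ => (1:ℝ≥0∞)) t
            + (Ioi (1:ℝ)).indicator (fun t => ENNReal.ofReal ((t / A) ^ (-s))) t) :=
          setLIntegral_mono ((measurable_const.indicator measurableSet_Ioc).add
            (hmeas2.indicator measurableSet_Ioi)) hbnd
      _ ≤ ∫⁻ t, ((Ioc (0:ℝ) 1).indicator (fun _ => (1:ℝ≥0∞)) t
            + (Ioi (1:ℝ)).indicator (fun t => ENNReal.ofReal ((t / A) ^ (-s))) t) :=
          setLIntegral_le_lintegral _ _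
      _ = (∫⁻ t, (Ioc (0:ℝ) 1).indicator (fun _ => (1:ℝ≥0∞)) t)
            + ∫⁻ t, (Ioi (1:ℝ)).indicator (fun t => ENNReal.ofReal ((t / A) ^ (-s))) t :=
          lintegral_add_left (measurable_const.indicator measurableSet_Ioc) _
      _ < ⊤ := by
          rw [lintegral_indicator measurableSet_Ioc, lintegral_indicator measurableSet_Ioi]
          have hI1 : (∫⁻ _ in Ioc (0:ℝ) 1, (1:ℝ≥0∞)) = volume (Ioc (0:ℝ) 1) :=
            setLIntegral_one _
          have hI2 : (∫⁻ t in Ioi (1:ℝ), ENNReal.ofReal ((t / A) ^ (-s)))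
              = ENNReal.ofReal (∫ t in Ioi (1:ℝ), (t / A) ^ (-s)) :=
            (ofReal_integral_eq_lintegral_ofReal hint hnn).symm
          rw [hI1, hI2, Real.volume_Ioc]
          exact ENNReal.add_lt_top.2 ⟨ENNReal.ofReal_lt_top, ENNReal.ofReal_lt_top⟩
  · -- divergence
    intro a
    set Ω : Set (EuclideanSpace ℝ (Fin n)) := Metric.ball 0 1 \ {0} with hΩ
    set δ' : ℝ := δ - κ * p with hδ'def
    have hδ'' : 0 < δ' := hδ'
    have hδ'n : δ' ≤ (n:ℝ) := by rw [hδ'def]; nlinarith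
    set g : EuclideanSpace ℝ (Fin n) → ℝ := fun x => |‖x‖ ^ μ - a| ^ q with hg
    set T : ℝ := max 1 (|a| ^ q) with hT
    have hT1 : (1:ℝ) ≤ T := le_max_left _ _
    have hT0 : (0:ℝ) < T := lt_of_lt_of_le one_pos hT1
    have hμq : μ⁻¹ * δ' = -q := by
      rw [hδ'def, hμdef]
      field_simp
      rfl
    have hpt : ∀ t ∈ Ioi T, ENNReal.ofReal (2 ^ (-q) * t⁻¹) ≤
        hContent n δ' {x ∈ Ω | t < g x} := by
      intro t ht
      have ht1 : 1 < t := lt_of_le_of_lt hT1 ht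
      have ht0 : (0:ℝ) < t := lt_trans one_pos ht1
      have hta : |a| ^ q ≤ t := le_trans (le_max_right _ _) (le_of_lt ht)
      set c : ℝ := 2 * t ^ q⁻¹ with hc
      have htq1 : (1:ℝ) ≤ t ^ q⁻¹ := by
        calc (1:ℝ) = 1 ^ q⁻¹ := (Real.one_rpow _).symm
          _ ≤ t ^ q⁻¹ := Real.rpow_le_rpow zero_le_one ht1.le (by positivity)
      have hc1 : 1 < c := by rw [hc]; nlinarith
      have hc0 : 0 < c := lt_trans one_pos hc1
      set R : ℝ := c ^ μ⁻¹ with hR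
      have hR0 : 0 < R := Real.rpow_pos_of_pos hc0 _
      have hR1 : R < 1 := Real.rpow_lt_one_of_one_lt_of_neg hc1 (inv_lt_zero.2 hμ0)
      have haq : |a| ≤ t ^ q⁻¹ := by
        have h5 := Real.rpow_le_rpow (by positivity) hta (by positivity : (0:ℝ) ≤ q⁻¹)
        rwa [Real.rpow_rpow_inv (abs_nonneg a) hq0.ne'] at h5
      have hsub : Metric.ball (0 : EuclideanSpace ℝ (Fin n)) R \ {0} ⊆ {x ∈ Ω | t < g x} := by
        rintro x ⟨hxR, hx0⟩
        have hx0' : x ≠ 0 := by simpa using hx0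
        have hxn : 0 < ‖x‖ := norm_pos_iff.2 hx0'
        have hxR' : ‖x‖ < R := mem_ball_zero_iff.1 hxR
        refine ⟨⟨mem_ball_zero_iff.2 (lt_trans hxR' hR1), hx0⟩, ?_⟩
        have h3 : R ^ μ < ‖x‖ ^ μ := Real.rpow_lt_rpow_of_neg hxn hxR' hμ0
        have h4 : R ^ μ = c := by rw [hR]; exact Real.rpow_inv_rpow hc0.le hμ0.ne
        have h6 : t ^ q⁻¹ < |‖x‖ ^ μ - a| := by
          have hle := le_abs_self (‖x‖ ^ μ - a)
          have ha1 := le_abs_self a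
          linarith [h3, h4, haq, hle, ha1, hc]
        have h7 : (t ^ q⁻¹) ^ q < |‖x‖ ^ μ - a| ^ q :=
          Real.rpow_lt_rpow (Real.rpow_nonneg ht0.le _) h6 hq0
        rwa [Real.rpow_inv_rpow ht0.le hq0.ne'] at h7
      have hlow : ENNReal.ofReal R ^ δ' ≤ hContent n δ' {x ∈ Ω | t < g x} :=
        le_trans (le_hContent_punctured_ball hn0 hδ'' hδ'n hR0) (hContent_mono hsub)
      have h8 : (t ^ q⁻¹) ^ (-q) = t⁻¹ := by
        rw [← Real.rpow_mul ht0.le, show q⁻¹ * -q = -1 by field_simp, Real.rpow_neg_one]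
      have hRδ : R ^ δ' = 2 ^ (-q) * t⁻¹ := by
        rw [hR, ← Real.rpow_mul hc0.le, hμq, hc,
          Real.mul_rpow (by norm_num : (0:ℝ) ≤ 2) (Real.rpow_nonneg ht0.le _), h8]
      calc ENNReal.ofReal (2 ^ (-q) * t⁻¹) = ENNReal.ofReal (R ^ δ') := by rw [hRδ]
        _ = ENNReal.ofReal R ^ δ' := (ENNReal.ofReal_rpow_of_pos hR0).symm
        _ ≤ _ := hlow
    have hinv : ∫⁻ t in Ioi T, ENNReal.ofReal t⁻¹ = ∞ := by
      by_contra hcon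
      have hint : IntegrableOn (fun t : ℝ => t⁻¹) (Ioi T) := by
        constructor
        · exact measurable_inv.aestronglyMeasurable
        · rw [hasFiniteIntegral_iff_ofReal ?_]
          · exact lt_top_iff_ne_top.2 hcon
          · filter_upwards [ae_restrict_mem measurableSet_Ioi] with t ht
            have h9 : (0:ℝ) < t := lt_trans hT0 ht
            positivity
      have hint2 : IntegrableOn (fun t : ℝ => t ^ (-1:ℝ)) (Ioi T) := by
        refine hint.congr_fun (fun t ht => ?_) measurableSet_Ioi
        exact (Real.rpow_neg_one t).symm
      rw [integrableOn_Ioi_rpow_iff hT0] at hint2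
      linarith
    have h2q : (0:ℝ) < 2 ^ (-q) := Real.rpow_pos_of_pos two_pos _
    have hIoiT : ∫⁻ t in Ioi T, ENNReal.ofReal (2 ^ (-q) * t⁻¹) = ∞ := by
      have hrw : ∀ t:ℝ, ENNReal.ofReal (2 ^ (-q) * t⁻¹)
          = ENNReal.ofReal (2 ^ (-q)) * ENNReal.ofReal t⁻¹ :=
        fun t => ENNReal.ofReal_mul h2q.le
      simp_rw [hrw]
      rw [lintegral_const_mul _ (measurable_inv.ennreal_ofReal), hinv,
        ENNReal.mul_top (by simp [h2q])]
    refine top_le_iff.1 ?_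
    calc (⊤:ℝ≥0∞) = ∫⁻ t in Ioi T, ENNReal.ofReal (2 ^ (-q) * t⁻¹) := hIoiT.symm
      _ ≤ ∫⁻ t in Ioi T, hContent n δ' {x ∈ Ω | t < g x} :=
          lintegral_mono_ae ((ae_restrict_iff' measurableSet_Ioi).2 (ae_of_all _ hpt))
      _ ≤ ∫⁻ t in Ioi (0:ℝ), hContent n δ' {x ∈ Ω | t < g x} :=
          lintegral_mono_set (Ioi_subset_Ioi hT0.le)
      _ = choquet n δ' Ω g := rfl
end
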